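/- arXiv:2212.07727 — 3 statements merged into one kernel-verified Lean document; each statement's English description precedes it below -/
import Mathlib

section
/- Let E : [a, b] → ℝ be absolutely continuous, nonincreasing, and satisfy E'(t) ≤ -P·E(t)^{(k-2)/k} a.e. on the set where μ^{2k/(k+6)} ≤ E(t) ≤ 1, where k > 2 is an integer, P > 0, 0 < μ < 1, and 0 < E(a) ≤ ε² with ε ∈ (0,1). If t̄ denotes the supremum of s ∈ [a,b] such that μ^{2k/(k+6)} ≤ E(t) ≤ 1 for all t ∈ [a, s], then t̄ ≤ a + (k·ε^{4/k})/(2P). -/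
/-!
While `E` stays in `[μ^{2k/(k+6)}, 1]` we have `E' ≤ -P E^{1-q}` with `q = 2/k`, so the chain
rule gives `(E^q)' ≤ -qP` almost everywhere. Since `E^q` is antitone, its drop over `[a, s]` is at
least the integral of its derivative (a singular part can only add to the drop), hence
`qP (s - a) ≤ E(a)^q ≤ ε^{2q}`.
-/

open MeasureTheory Set

theorem MonotoneOn.mul_sub_le_sub_of_ae_le_deriv {f : ℝ → ℝ} {a b c : ℝ} (hab : a ≤ b)
    (hf : MonotoneOn f (Icc a b)) (hc : ∀ᵐ t ∂(volume.restrict (Icc a b)), c ≤ deriv f t) :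
    c * (b - a) ≤ f b - f a := by
  rw [← uIcc_of_le hab] at hf
  have hfab : f a ≤ f b := hf left_mem_uIcc right_mem_uIcc hab
  calc c * (b - a) = ∫ _ in a..b, c := by simp [mul_comm]
    _ ≤ ∫ t in a..b, deriv f t :=
      intervalIntegral.integral_mono_ae_restrict hab intervalIntegrable_const
        hf.intervalIntegrable_deriv hc
    _ ≤ f b - f a := by
      have hmem := hf.intervalIntegral_deriv_mem_uIcc
      rw [uIcc_of_le (sub_nonneg.2 hfab)] at hmem
      exact hmem.2

theorem mul_le_deriv_neg_rpow {g : ℝ → ℝ} {g' t P q : ℝ} (hg : HasDerivAt g g' t)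
    (hpos : 0 < g t) (hq : 0 < q) (hg' : g' ≤ -P * g t ^ (1 - q)) :
    q * P ≤ deriv (fun s => -g s ^ q) t := by
  rw [(hg.rpow_const (Or.inl hpos.ne')).fun_neg.deriv]
  have hcancel : g t ^ (1 - q) * g t ^ (q - 1) = 1 := by
    rw [← Real.rpow_add hpos, sub_add_sub_cancel', sub_self, Real.rpow_zero]
  have hpow : 0 < g t ^ (q - 1) := Real.rpow_pos_of_pos hpos _
  linear_combination mul_le_mul_of_nonneg_right hg' (mul_pos hq hpow).le - q * P * hcancel

theorem AntitoneOn.mul_sub_le_rpow_sub_rpow {E E' : ℝ → ℝ} {a b P q : ℝ} (hab : a ≤ b)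
    (hE : AntitoneOn E (Icc a b)) (hpos : ∀ t ∈ Icc a b, 0 < E t) (hq : 0 < q)
    (hderiv : ∀ᵐ t ∂(volume.restrict (Icc a b)),
      HasDerivAt E (E' t) t ∧ E' t ≤ -P * E t ^ (1 - q)) :
    q * P * (b - a) ≤ E a ^ q - E b ^ q := by
  have hmono : MonotoneOn (fun t => -E t ^ q) (Icc a b) := fun x hx y hy hxy =>
    neg_le_neg (Real.rpow_le_rpow (hpos y hy).le (hE hx hy hxy) hq.le)
  have hslope : ∀ᵐ t ∂(volume.restrict (Icc a b)), q * P ≤ deriv (fun s => -E s ^ q) t := by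
    filter_upwards [hderiv, ae_restrict_mem measurableSet_Icc] with t ht htab
    exact mul_le_deriv_neg_rpow ht.1 (hpos t htab) hq ht.2
  linarith [hmono.mul_sub_le_sub_of_ae_le_deriv hab hslope]

theorem stmt1_general (E E' : ℝ → ℝ) (a b P μ ε : ℝ) (k : ℕ)
    (hk : 2 < k) (hP : 0 < P) (hμ : 0 < μ) (hε : 0 < ε)
    (hab : a < b)
    (hmono : AntitoneOn E (Icc a b))
    (hderiv : ∀ᵐ t ∂(volume.restrict (Icc a b)),
      HasDerivAt E (E' t) t ∧
      (μ ^ ((2*(k:ℝ))/((k:ℝ)+6)) ≤ E t ∧ E t ≤ 1 → E' t ≤ -P * E t ^ (((k:ℝ)-2)/(k:ℝ))))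
    (hEa2 : E a ≤ ε^2)
    (hamem : μ ^ ((2*(k:ℝ))/((k:ℝ)+6)) ≤ E a ∧ E a ≤ 1)
    (tbar : ℝ)
    (htbar : tbar = sSup {s | s ∈ Icc a b ∧
      ∀ t ∈ Icc a s, μ ^ ((2*(k:ℝ))/((k:ℝ)+6)) ≤ E t ∧ E t ≤ 1}) :
    tbar ≤ a + ((k:ℝ) * ε ^ ((4:ℝ)/(k:ℝ))) / (2*P) := by
  have hk0 : (0:ℝ) < k := by exact_mod_cast (by omega : 0 < k)
  have hexp : ((k:ℝ) - 2) / k = 1 - 2 / k := by field_simp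
  rw [htbar]
  refine csSup_le ⟨a, left_mem_Icc.2 hab.le, fun t ht => le_antisymm ht.2 ht.1 ▸ hamem⟩ ?_
  rintro s ⟨hs, hEs⟩
  have hpos : ∀ t ∈ Icc a s, 0 < E t := fun t ht =>
    (Real.rpow_pos_of_pos hμ _).trans_le (hEs t ht).1
  have hderiv_s : ∀ᵐ t ∂(volume.restrict (Icc a s)),
      HasDerivAt E (E' t) t ∧ E' t ≤ -P * E t ^ (1 - 2 / (k:ℝ)) := by
    filter_upwards [ae_restrict_of_ae_restrict_of_subset (Icc_subset_Icc_right hs.2) hderiv,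
      ae_restrict_mem measurableSet_Icc] with t ht htas
    exact ⟨ht.1, hexp ▸ ht.2 (hEs t htas)⟩
  have hdrop := (hmono.mono (Icc_subset_Icc_right hs.2)).mul_sub_le_rpow_sub_rpow hs.1 hpos
    (by positivity) hderiv_s
  have hEa_pow : E a ^ (2 / (k:ℝ)) ≤ ε ^ ((4:ℝ) / k) :=
    calc E a ^ (2 / (k:ℝ)) ≤ (ε ^ 2) ^ (2 / (k:ℝ)) :=
          Real.rpow_le_rpow (hpos a (left_mem_Icc.2 hs.1)).le hEa2 (by positivity)
      _ = ε ^ ((4:ℝ) / k) := by rw [← Real.rpow_natCast, ← Real.rpow_mul hε.le]; ring_nf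
  have hEs_pow := Real.rpow_nonneg (hpos s (right_mem_Icc.2 hs.1)).le (2 / (k:ℝ))
  rw [← sub_le_iff_le_add', le_div_iff₀ (by positivity)]
  calc (s - a) * (2 * P) = k * (2 / k * P * (s - a)) := by field_simp
    _ ≤ k * ε ^ ((4:ℝ) / k) := by gcongr; linarith

theorem stmt1 (E E' : ℝ → ℝ) (a b P μ ε : ℝ) (k : ℕ)
    (hk : 2 < k) (hP : 0 < P) (hμ : 0 < μ) (hμ1 : μ < 1) (hε : 0 < ε) (hε1 : ε < 1)
    (hab : a < b)
    (hmono : AntitoneOn E (Icc a b))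
    (hderiv : ∀ᵐ t ∂(volume.restrict (Icc a b)),
      HasDerivAt E (E' t) t ∧
      (μ ^ ((2*(k:ℝ))/((k:ℝ)+6)) ≤ E t ∧ E t ≤ 1 → E' t ≤ -P * E t ^ (((k:ℝ)-2)/(k:ℝ))))
    (hAC : ∀ s ∈ Icc a b, E s - E a = ∫ t in a..s, E' t)
    (hEa : 0 < E a) (hEa2 : E a ≤ ε^2)
    (hamem : μ ^ ((2*(k:ℝ))/((k:ℝ)+6)) ≤ E a ∧ E a ≤ 1)
    (tbar : ℝ)
    (htbar : tbar = sSup {s | s ∈ Icc a b ∧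
      ∀ t ∈ Icc a s, μ ^ ((2*(k:ℝ))/((k:ℝ)+6)) ≤ E t ∧ E t ≤ 1}) :
    tbar ≤ a + ((k:ℝ) * ε ^ ((4:ℝ)/(k:ℝ))) / (2*P) :=
  stmt1_general E E' a b P μ ε k hk hP hμ hε hab hmono hderiv hEa2 hamem tbar htbar
end

section
/- For each integer j ≥ 1 set σ_j := ∑_{i=1}^j 1/i. Then for every j ≥ 3, the number α_j > 1 defined by 1/α_j = 1 - 1/(4σ_j) satisfies the inequality √(σ_j + 1/(j+1)) - √(σ_j/α_j) ≤ √(1 - 1/α_j). -/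
/-!
With `s = σ_j`, the definition of `α` gives `σ_j / α = s - 1/4` and `1 - 1/α = 1/(4s)`. The square
of `√(s - 1/4) + √(1/(4s))` is `s - 1/4 + 1/(4s) + √(1 - 1/(4s))`, and since `1 - 1/(4s) ∈ [0, 1]`
its square root dominates it, so this square is at least `s + 3/4 ≥ s + 1/(j+1)`.
-/

open Finset Real

lemma one_le_sum_range_one_div_succ {j : ℕ} (hj : j ≠ 0) :
    (1 : ℝ) ≤ ∑ i ∈ range j, (1 : ℝ) / (i + 1) := by
  simpa using single_le_sum (f := fun i : ℕ => (1 : ℝ) / (i + 1))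
    (fun i _ => by positivity) (mem_range.mpr (Nat.pos_of_ne_zero hj))

lemma two_mul_sqrt_mul_sqrt_one_div {s : ℝ} (hs : 1 / 4 ≤ s) :
    2 * (√(s - 1 / 4) * √(1 / (4 * s))) = √(1 - 1 / (4 * s)) := by
  have hs0 : s ≠ 0 := by positivity
  rw [← sqrt_mul (by linarith), ← sqrt_sq (zero_le_two : (0 : ℝ) ≤ 2), ← sqrt_mul (by norm_num)]
  congr 1
  field_simp
  ring

lemma sqrt_add_three_fourths_le {s : ℝ} (hs : 1 / 4 ≤ s) :
    √(s + 3 / 4) ≤ √(s - 1 / 4) + √(1 / (4 * s)) := by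
  have hx0 : 0 ≤ 1 - 1 / (4 * s) := by
    rw [sub_nonneg, div_le_one (by positivity)]
    linarith
  have hx1 : 1 - 1 / (4 * s) ≤ 1 := by
    have : 0 ≤ 1 / (4 * s) := by positivity
    linarith
  have hcross : 1 - 1 / (4 * s) ≤ 2 * (√(s - 1 / 4) * √(1 / (4 * s))) := by
    rw [two_mul_sqrt_mul_sqrt_one_div hs]
    exact le_sqrt_self_iff.mpr hx1
  rw [sqrt_le_left (by positivity), add_sq', sq_sqrt (by linarith), sq_sqrt (by positivity)]
  linarith

theorem stmt2_general (σ : ℕ → ℝ) (hσ : ∀ j, σ j = ∑ i ∈ Finset.range j, (1:ℝ)/(i+1))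
    (j : ℕ) (hj : 3 ≤ j) (α : ℝ) (hαdef : 1/α = 1 - 1/(4 * σ j)) :
    Real.sqrt (σ j + 1/((j:ℝ)+1)) - Real.sqrt (σ j / α) ≤ Real.sqrt (1 - 1/α) := by
  have hσ1 : 1 ≤ σ j := hσ j ▸ one_le_sum_range_one_div_succ (by omega)
  have hquot : σ j / α = σ j - 1 / 4 := by
    rw [div_eq_mul_one_div, hαdef]
    field_simp
  have hsub : 1 - 1 / α = 1 / (4 * σ j) := by linarith
  have hj' : 1 / ((j : ℝ) + 1) ≤ 3 / 4 := by
    rw [div_le_div_iff₀ (by positivity) (by norm_num)]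
    have : (3 : ℝ) ≤ j := by exact_mod_cast hj
    linarith
  rw [hquot, hsub, sub_le_iff_le_add]
  calc √(σ j + 1 / ((j : ℝ) + 1)) ≤ √(σ j + 3 / 4) := sqrt_le_sqrt (by linarith)
    _ ≤ √(σ j - 1 / 4) + √(1 / (4 * σ j)) := sqrt_add_three_fourths_le (by linarith)
    _ = _ := add_comm _ _

theorem stmt2 (σ : ℕ → ℝ) (hσ : ∀ j, σ j = ∑ i ∈ Finset.range j, (1:ℝ)/(i+1))
    (j : ℕ) (hj : 3 ≤ j) (α : ℝ) (hα : 1 < α) (hαdef : 1/α = 1 - 1/(4 * σ j)) :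
    Real.sqrt (σ j + 1/((j:ℝ)+1)) - Real.sqrt (σ j / α) ≤ Real.sqrt (1 - 1/α) :=
  stmt2_general σ hσ j hj α hαdef
end

section
/- Fix α > 1 and an integer j ≥ 1, set σ_j := ∑_{i=1}^j 1/i. Let (x,t) ∈ ℝ^k × (-∞, 0) satisfy σ_j|t| ≤ |x|² < σ_{j+1}|t|, and define t₀ := t/α and x₀ := √(σ_j|t|/α)·x/|x|. Then (x₀, t₀) satisfies |x₀|² = σ_j|t₀| (so (x₀,t₀) lies on the boundary of the parabolic region {|x|² < σ_j|t|}), and moreover |x - x₀| < √|t|·(√σ_{j+1} - √(σ_j/α)) and √|t - t₀| = √|t|·√(1 - 1/α). Consequently, if √(σ_j + 1/(j+1)) - √(σ_j/α) ≤ √(1 - 1/α), then |x - x₀|² < |t - t₀|. -/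
/-!
The point `x₀` is the radial projection of `x` onto the sphere of radius `√(σ_j |t| / α)`, which
lies inside the sphere through `x` because `α > 1`. Hence `‖x - x₀‖ = ‖x‖ - ‖x₀‖`, and the bound
`‖x‖ < √(σ_{j+1} |t|)` gives the estimate; time scales by the factor `1 - 1/α`.
-/

section RadialProjection

variable {E : Type*} [NormedAddCommGroup E] [NormedSpace ℝ E] {r : ℝ}

theorem norm_div_norm_smul_self (x : E) (hr₀ : 0 ≤ r) (hr : r ≤ ‖x‖) :
    ‖(r / ‖x‖) • x‖ = r := by
  rcases (norm_nonneg x).eq_or_lt with hx | hx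
  · rw [← hx, div_zero, zero_smul, norm_zero]
    exact (le_antisymm (hr.trans hx.ge) hr₀).symm
  · rw [norm_smul, Real.norm_of_nonneg (by positivity), div_mul_cancel₀ _ hx.ne']

theorem norm_sub_div_norm_smul_self (x : E) (hr₀ : 0 ≤ r) (hr : r ≤ ‖x‖) :
    ‖x - (r / ‖x‖) • x‖ = ‖x‖ - r := by
  have hc : r / ‖x‖ ≤ 1 := div_le_one_of_le₀ hr (norm_nonneg x)
  calc ‖x - (r / ‖x‖) • x‖ = ‖(1 - r / ‖x‖) • x‖ := by rw [sub_smul, one_smul]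
    _ = ‖x‖ - ‖(r / ‖x‖) • x‖ := by
      rw [norm_smul, norm_smul, Real.norm_of_nonneg (sub_nonneg.2 hc),
        Real.norm_of_nonneg (by positivity)]
      ring
    _ = ‖x‖ - r := by rw [norm_div_norm_smul_self x hr₀ hr]

end RadialProjection

theorem abs_sub_div_self_of_one_le {α : ℝ} (hα : 1 ≤ α) (t : ℝ) :
    |t - t / α| = |t| * (1 - 1 / α) := by
  have h : 0 ≤ 1 - 1 / α := sub_nonneg.2 (div_le_one_of_le₀ hα (zero_le_one.trans hα))
  rw [show t - t / α = t * (1 - 1 / α) by ring, abs_mul, abs_of_nonneg h]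

theorem stmt6_general (k : ℕ) (σ : ℕ → ℝ)
    (hσ : ∀ j, σ j = ∑ i ∈ Finset.range j, (1:ℝ)/(i+1))
    (α : ℝ) (hα : 1 < α) (j : ℕ)
    (x : EuclideanSpace ℝ (Fin k)) (t : ℝ)
    (hlow : σ j * |t| ≤ ‖x‖^2) (hhigh : ‖x‖^2 < σ (j+1) * |t|)
    (t₀ : ℝ) (ht₀ : t₀ = t / α)
    (x₀ : EuclideanSpace ℝ (Fin k))
    (hx₀ : x₀ = (Real.sqrt (σ j * |t| / α) / ‖x‖) • x) :
    ‖x₀‖^2 = σ j * |t₀| ∧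
    ‖x - x₀‖ < Real.sqrt |t| * (Real.sqrt (σ (j+1)) - Real.sqrt (σ j / α)) ∧
    Real.sqrt |t - t₀| = Real.sqrt |t| * Real.sqrt (1 - 1/α) ∧
    (Real.sqrt (σ j + 1/((j:ℝ)+1)) - Real.sqrt (σ j / α) ≤ Real.sqrt (1 - 1/α) →
      ‖x - x₀‖^2 < |t - t₀|) := by
  have hα₀ : 0 < α := zero_lt_one.trans hα
  have hσj : 0 ≤ σ j := hσ j ▸ Finset.sum_nonneg fun i _ => by positivity
  have hσsucc : σ (j+1) = σ j + 1/((j:ℝ)+1) := by rw [hσ, hσ, Finset.sum_range_succ]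
  have hr : Real.sqrt (σ j * |t| / α) ≤ ‖x‖ := (Real.sqrt_le_left (norm_nonneg x)).2 <|
    (div_le_self (by positivity) hα.le).trans hlow
  have hnorm : ‖x₀‖ = Real.sqrt (σ j * |t| / α) :=
    hx₀ ▸ norm_div_norm_smul_self x (Real.sqrt_nonneg _) hr
  have hdist : ‖x - x₀‖ = ‖x‖ - Real.sqrt (σ j * |t| / α) :=
    hx₀ ▸ norm_sub_div_norm_smul_self x (Real.sqrt_nonneg _) hr
  have hx : ‖x‖ < Real.sqrt |t| * Real.sqrt (σ (j+1)) := by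
    rw [← Real.sqrt_mul (abs_nonneg t), mul_comm]
    exact (Real.lt_sqrt (norm_nonneg x)).2 hhigh
  have hdist_lt : ‖x - x₀‖ < Real.sqrt |t| * (Real.sqrt (σ (j+1)) - Real.sqrt (σ j / α)) := by
    have hr_eq : Real.sqrt (σ j * |t| / α) = Real.sqrt |t| * Real.sqrt (σ j / α) := by
      rw [← Real.sqrt_mul (abs_nonneg t)]
      ring_nf
    rw [hdist, hr_eq, mul_sub]
    linarith
  have htime : Real.sqrt |t - t₀| = Real.sqrt |t| * Real.sqrt (1 - 1/α) := by
    rw [ht₀, abs_sub_div_self_of_one_le hα.le, Real.sqrt_mul (abs_nonneg t)]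
  refine ⟨?_, hdist_lt, htime, fun hcond => ?_⟩
  · rw [hnorm, Real.sq_sqrt (by positivity), ht₀, abs_div, abs_of_pos hα₀, mul_div_assoc]
  · refine (Real.lt_sqrt (norm_nonneg _)).1 (hdist_lt.trans_le ?_)
    rw [htime, hσsucc]
    exact mul_le_mul_of_nonneg_left hcond (Real.sqrt_nonneg _)

theorem stmt6 (k : ℕ) (hk : 1 ≤ k) (σ : ℕ → ℝ)
    (hσ : ∀ j, σ j = ∑ i ∈ Finset.range j, (1:ℝ)/(i+1))
    (α : ℝ) (hα : 1 < α) (j : ℕ) (hj : 1 ≤ j)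
    (x : EuclideanSpace ℝ (Fin k)) (t : ℝ) (ht : t < 0)
    (hlow : σ j * |t| ≤ ‖x‖^2) (hhigh : ‖x‖^2 < σ (j+1) * |t|)
    (t₀ : ℝ) (ht₀ : t₀ = t / α)
    (x₀ : EuclideanSpace ℝ (Fin k))
    (hx₀ : x₀ = (Real.sqrt (σ j * |t| / α) / ‖x‖) • x) :
    ‖x₀‖^2 = σ j * |t₀| ∧
    ‖x - x₀‖ < Real.sqrt |t| * (Real.sqrt (σ (j+1)) - Real.sqrt (σ j / α)) ∧
    Real.sqrt |t - t₀| = Real.sqrt |t| * Real.sqrt (1 - 1/α) ∧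
    (Real.sqrt (σ j + 1/((j:ℝ)+1)) - Real.sqrt (σ j / α) ≤ Real.sqrt (1 - 1/α) →
      ‖x - x₀‖^2 < |t - t₀|) :=
  stmt6_general k σ hσ α hα j x t hlow hhigh t₀ ht₀ x₀ hx₀
end
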